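/- With aligned preferences (common rankings on both sides), k ≥ 1, and graph G on n = k·n_f workers: if G contains a Hamiltonian path in which, for all i < j, every worker of block W_i = {w_{ki+1},...,w_{k(i+1)}} is visited before every worker of block W_j, then the complete locally stable matching is unique, namely μ(f_{i+1}) = W_i for all 0 ≤ i < n_f. -/

import Mathlib

/-!
Since `ψ` is a bijection along which the block index never decreases, path position `p` carries
a worker of block `⌊p / k⌋`. Induct on blocks: if `W_0, …, W_{b-1}` are employed by
`f_0, …, f_{b-1}`, those firms are full, so if some worker of `W_b` is not employed by `f_b`,
then `f_b` employs a worker of a later block `W_B` and every worker of `W_b, …, W_{B-1}` outside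
`μ(f_b)` blocks with `f_b`. Local stability then forbids such a worker to neighbour `μ(f_b)`, so
along the path segment through `W_b, …, W_{B-1}` membership in `μ(f_b)` never changes. Hence
this segment avoids `μ(f_b)`, so `μ(f_b) = W_B`, and the path edge from `W_{B-1}` into `W_B`
contradicts local stability.
-/

open Finset

/-- Smaller indices are preferred on both sides; `z` is the least preferred employee of `f`, so
the two premises say that `(w, f)` is a blocking pair. -/
def IsLocallyStable {n m : ℕ} (G : SimpleGraph (Fin n)) (μ : Fin n → Fin m) : Prop :=
  ∀ w f, f < μ w → (∃ z, μ z = f ∧ (∀ y, μ y = f → y ≤ z) ∧ w < z) → ¬∃ y, G.Adj w y ∧ μ y = f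

def employees {n m : ℕ} (μ : Fin n → Fin m) (f : Fin m) : Finset (Fin n) := {w | μ w = f}

def block (n k b : ℕ) : Finset (Fin n) := {w | w.1 / k = b}

@[simp] theorem mem_employees {n m : ℕ} {μ : Fin n → Fin m} {f : Fin m} {w : Fin n} :
    w ∈ employees μ f ↔ μ w = f := by
  simp [employees]

@[simp] theorem mem_block {n k b : ℕ} {w : Fin n} : w ∈ block n k b ↔ w.1 / k = b := by
  simp [block]

theorem card_block {k nf b : ℕ} (hk : 0 < k) (hb : b < nf) : #(block (k * nf) k b) = k := by
  have hbk : b * k + k ≤ k * nf := by nlinarith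
  have : (block (k * nf) k b).map Fin.valEmbedding = Ico (b * k) (b * k + k) := by
    ext x
    simp only [mem_map, mem_block, Fin.valEmbedding_apply, mem_Ico, Nat.div_eq_iff hk]
    constructor
    · rintro ⟨w, hw, rfl⟩; omega
    · intro hx; exact ⟨⟨x, by omega⟩, by simp only; omega, rfl⟩
  rw [← card_map, this, Nat.card_Ico]
  omega

theorem isLocallyStable_of_forall_val_eq_div {n m k : ℕ} {G : SimpleGraph (Fin n)}
    {μ : Fin n → Fin m} (hμ : ∀ w, (μ w).1 = w.1 / k) : IsLocallyStable G μ := by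
  rintro w f hf ⟨z, hz, -, hwz⟩ -
  have hzw : z.1 / k < w.1 / k := by rw [← hμ, ← hμ, hz]; exact hf
  exact hwz.not_gt (Nat.lt_of_div_lt_div hzw)

theorem IsLocallyStable.eq_of_adj {n m : ℕ} {G : SimpleGraph (Fin n)} {μ : Fin n → Fin m}
    (hμ : IsLocallyStable G μ) {f : Fin m} {w y z : Fin n} (hwf : f ≤ μ w) (hzf : μ z = f)
    (hz : ∀ y, μ y = f → y ≤ z) (hwz : w < z) (hwy : G.Adj w y) (hyf : μ y = f) : μ w = f := by
  by_contra hne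
  exact hμ w f (lt_of_le_of_ne hwf (Ne.symm hne)) ⟨z, hzf, hz, hwz⟩ ⟨y, hwy, hyf⟩

theorem div_apply_eq_of_monotone {n k : ℕ} {ψ : Fin n ≃ Fin n}
    (h : Monotone fun i => (ψ i).1 / k) (p : Fin n) : (ψ p).1 / k = p.1 / k :=
  congrFun (Tuple.unique_monotone (f := fun i : Fin n => i.1 / k) (τ := 1) h
    fun _ _ hij => Nat.div_le_div_right hij) p

theorem Nat.iff_of_succ_iff {P : ℕ → Prop} {a c : ℕ}
    (h : ∀ p, a ≤ p → p + 1 < c → (P (p + 1) ↔ P p)) {p : ℕ} (hap : a ≤ p) (hpc : p < c) :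
    P p ↔ P a := by
  induction p, hap using Nat.le_induction with
  | base => rfl
  | succ p hap ih => exact (h p hap hpc).trans (ih (by omega))

def IsHamiltonianPathOrder {n : ℕ} (G : SimpleGraph (Fin n)) (ψ : Fin n ≃ Fin n) : Prop :=
  ∀ i : Fin n, ∀ h : i.1 + 1 < n, G.Adj (ψ i) (ψ ⟨i.1 + 1, h⟩)

theorem IsHamiltonianPathOrder.adj {n : ℕ} {G : SimpleGraph (Fin n)} {ψ : Fin n ≃ Fin n}
    (hpath : IsHamiltonianPathOrder G ψ) {i j : Fin n} (hij : i.1 + 1 = j.1) :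
    G.Adj (ψ i) (ψ j) := by
  obtain ⟨j, hj⟩ := j
  subst hij
  exact hpath i hj

theorem mem_iff_mem_of_hamiltonian_path {k nf : ℕ} {G : SimpleGraph (Fin (k * nf))}
    {ψ : Fin (k * nf) ≃ Fin (k * nf)}
    (hpath : IsHamiltonianPathOrder G ψ)
    (hψ : ∀ p, (ψ p).1 / k = p.1 / k) {S : Finset (Fin (k * nf))} {b B : ℕ} (hB : B ≤ nf)
    (hS : ∀ w y, b ≤ w.1 / k → w.1 / k < B → G.Adj w y → y ∈ S → w ∈ S)
    {w v : Fin (k * nf)} (hbw : b ≤ w.1 / k) (hwB : w.1 / k < B) (hbv : b ≤ v.1 / k)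
    (hvB : v.1 / k < B) : w ∈ S ↔ v ∈ S := by
  have hk : 0 < k := Nat.pos_of_mul_pos_right w.pos
  have hblock : ∀ i : Fin (k * nf), b * k ≤ i.1 → i.1 < B * k →
      b ≤ (ψ i).1 / k ∧ (ψ i).1 / k < B := fun i h1 h2 => by
    rw [hψ, Nat.le_div_iff_mul_le hk, Nat.div_lt_iff_lt_mul hk]; exact ⟨h1, h2⟩
  let P (p : ℕ) : Prop := ∃ i : Fin (k * nf), i.1 = p ∧ ψ i ∈ S
  have hP : ∀ i : Fin (k * nf), P i.1 ↔ ψ i ∈ S := fun i =>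
    ⟨fun ⟨j, hj, hjS⟩ => Fin.ext hj ▸ hjS, fun hi => ⟨i, rfl, hi⟩⟩
  have hconst : ∀ p, b * k ≤ p → p + 1 < B * k → (P (p + 1) ↔ P p) := fun p hbp hpB => by
    have hpn : p + 1 < k * nf := hpB.trans_le (by nlinarith)
    let i : Fin (k * nf) := ⟨p, by omega⟩
    let j : Fin (k * nf) := ⟨p + 1, hpn⟩
    have hadj : G.Adj (ψ i) (ψ j) := hpath.adj rfl
    obtain ⟨hi1, hi2⟩ := hblock i hbp (by simp only [i]; omega)
    obtain ⟨hj1, hj2⟩ := hblock j (by simp only [j]; omega) hpB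
    rw [hP j, hP i]
    exact ⟨hS _ _ hi1 hi2 hadj, hS _ _ hj1 hj2 hadj.symm⟩
  have hmem : ∀ x : Fin (k * nf), b ≤ x.1 / k → x.1 / k < B → (x ∈ S ↔ P (b * k)) :=
    fun x h1 h2 => by
      have hx := hψ (ψ.symm x)
      rw [ψ.apply_symm_apply] at hx
      rw [hx, Nat.le_div_iff_mul_le hk] at h1
      rw [hx, Nat.div_lt_iff_lt_mul hk] at h2
      rw [← Nat.iff_of_succ_iff hconst h1 h2, hP, ψ.apply_symm_apply]
  exact (hmem w hbw hwB).trans (hmem v hbv hvB).symm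

theorem exists_adj_of_hamiltonian_path {k nf : ℕ} {G : SimpleGraph (Fin (k * nf))}
    {ψ : Fin (k * nf) ≃ Fin (k * nf)}
    (hpath : IsHamiltonianPathOrder G ψ)
    (hψ : ∀ p, (ψ p).1 / k = p.1 / k) (hk : 0 < k) {B : ℕ} (hB₀ : 0 < B) (hB : B < nf) :
    ∃ u v, u.1 / k + 1 = B ∧ v.1 / k = B ∧ G.Adj u v := by
  have hBk : B * k < k * nf := by nlinarith
  have hBk₀ : 0 < B * k := Nat.mul_pos hB₀ hk
  let u : Fin (k * nf) := ⟨B * k - 1, by omega⟩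
  let v : Fin (k * nf) := ⟨B * k, hBk⟩
  refine ⟨ψ u, ψ v, ?_, ?_, hpath.adj (by simp only [u, v]; omega)⟩
  · have hpred : (B - 1) * k = B * k - k := Nat.sub_one_mul B k
    have hkB : k ≤ B * k := Nat.le_mul_of_pos_left k hB₀
    rw [hψ, (Nat.div_eq_iff hk (y := B - 1)).2 (by simp only [u]; omega)]
    omega
  · rw [hψ]; exact Nat.mul_div_cancel B hk

section
variable {k nf : ℕ} {μ : Fin (k * nf) → Fin nf}

theorem le_val_of_le_div (hcard : ∀ f, #(employees μ f) = k) {b : ℕ}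
    (ih : ∀ w : Fin (k * nf), w.1 / k < b → (μ w).1 = w.1 / k) {w : Fin (k * nf)}
    (hw : b ≤ w.1 / k) : b ≤ (μ w).1 := by
  by_contra! hlt
  have hk : 0 < k := Nat.pos_of_mul_pos_right w.pos
  have hfull : block (k * nf) k (μ w) = employees μ (μ w) :=
    eq_of_subset_of_card_le
      (fun v hv => mem_employees.2 (Fin.ext ((ih v (mem_block.1 hv ▸ hlt)).trans (mem_block.1 hv))))
      (by rw [hcard, card_block hk (μ w).2])
  have hw' : w ∈ block (k * nf) k (μ w) := hfull ▸ mem_employees.2 rfl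
  rw [mem_block] at hw'
  omega

theorem IsLocallyStable.val_eq_of_div_eq {G : SimpleGraph (Fin (k * nf))}
    (hμ : IsLocallyStable G μ) (hcard : ∀ f, #(employees μ f) = k)
    {ψ : Fin (k * nf) ≃ Fin (k * nf)}
    (hpath : IsHamiltonianPathOrder G ψ)
    (hψ : ∀ p, (ψ p).1 / k = p.1 / k) {b : ℕ}
    (ih : ∀ w : Fin (k * nf), w.1 / k < b → (μ w).1 = w.1 / k) {w₀ : Fin (k * nf)}
    (hw₀ : w₀.1 / k = b) : (μ w₀).1 = b := by
  by_contra hne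
  have hk : 0 < k := Nat.pos_of_mul_pos_right w₀.pos
  have hb : b < nf := hw₀ ▸ Nat.div_lt_of_lt_mul w₀.2
  set f : Fin nf := ⟨b, hb⟩
  have hfb : f.1 = b := rfl
  have hw₀f : w₀ ∉ employees μ f := fun h => hne (congrArg Fin.val (mem_employees.1 h))
  obtain ⟨z, hzf, hz⟩ :=
    (employees μ f).exists_max_image id (card_pos.1 (by rw [hcard]; exact hk))
  set B := z.1 / k
  have hB : B < nf := Nat.div_lt_of_lt_mul z.2
  have hbounds : ∀ w ∈ employees μ f, b ≤ w.1 / k ∧ w.1 / k ≤ B := fun w hw => by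
    refine ⟨?_, Nat.div_le_div_right (hz w hw)⟩
    by_contra! h
    have := ih w h
    rw [mem_employees.1 hw] at this
    omega
  have hbB : b < B := by
    by_contra! hBb
    have hSb : employees μ f = block _ k b :=
      eq_of_subset_of_card_le (fun w hw => mem_block.2 (by have := hbounds w hw; omega))
        (by rw [hcard, card_block hk hb])
    exact hw₀f (hSb ▸ mem_block.2 hw₀)
  have hclosed : ∀ w y, b ≤ w.1 / k → w.1 / k < B → G.Adj w y → y ∈ employees μ f →
      w ∈ employees μ f := fun w y hbw hwB hwy hy =>
    mem_employees.2 (hμ.eq_of_adj (le_val_of_le_div hcard ih hbw) (mem_employees.1 hzf)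
      (fun y hy => hz y (mem_employees.2 hy)) (Nat.lt_of_div_lt_div hwB) hwy (mem_employees.1 hy))
  have hlow : ∀ w, b ≤ w.1 / k → w.1 / k < B → w ∉ employees μ f := fun w h1 h2 hw =>
    hw₀f ((mem_iff_mem_of_hamiltonian_path hpath hψ hB.le hclosed h1 h2 hw₀.ge (hw₀ ▸ hbB)).1 hw)
  have hfB : employees μ f = block _ k B :=
    eq_of_subset_of_card_le
      (fun w hw => mem_block.2 (by
        by_contra h
        exact hlow w (hbounds w hw).1 (lt_of_le_of_ne (hbounds w hw).2 h) hw))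
      (by rw [hcard, card_block hk hB])
  obtain ⟨u, v, hu, hv, huv⟩ := exists_adj_of_hamiltonian_path hpath hψ hk (by omega) hB
  have hbu : b ≤ u.1 / k := by omega
  exact hlow u hbu (by omega) (hclosed u v hbu (by omega) huv (hfB ▸ mem_block.2 hv))

end

theorem unique_locally_stable_of_block_hamiltonian_path_general
    (k nf : ℕ) (G : SimpleGraph (Fin (k * nf)))
    (ψ : Fin (k * nf) ≃ Fin (k * nf))
    (hpath : ∀ i : Fin (k * nf), ∀ h : i.1 + 1 < k * nf,
      G.Adj (ψ i) (ψ ⟨i.1 + 1, h⟩))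
    (hblocks : ∀ i j : Fin (k * nf), i ≤ j → (ψ i).1 / k ≤ (ψ j).1 / k) :
    ∀ μ : Fin (k * nf) → Fin nf,
      (∀ f : Fin nf, (Finset.univ.filter (fun w => μ w = f)).card = k) →
      ((∀ w : Fin (k * nf), ∀ f : Fin nf, f < μ w →
          (∃ z, μ z = f ∧ (∀ y, μ y = f → y ≤ z) ∧ w < z) →
          ¬ ∃ y, G.Adj w y ∧ μ y = f) ↔
        ∀ w : Fin (k * nf), (μ w).1 = w.1 / k) := by
  intro μ hcard
  have hψ : ∀ p, (ψ p).1 / k = p.1 / k := div_apply_eq_of_monotone hblocks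
  refine ⟨fun (hμ : IsLocallyStable G μ) w => ?_, isLocallyStable_of_forall_val_eq_div⟩
  suffices ∀ b, ∀ w : Fin (k * nf), w.1 / k = b → (μ w).1 = b from this _ w rfl
  intro b
  induction b using Nat.strong_induction_on with
  | _ b ih => exact fun w hw => hμ.val_eq_of_div_eq hcard hpath hψ (fun v hv => ih _ hv v rfl) hw

/-- With aligned preferences (common rankings by index on both sides), `k ≥ 1`
positions per firm and `n = k · n_f` workers: if `G` has a Hamiltonian path
`ψ 0, ψ 1, …` visiting the blocks `W_i = {w_{ki+1},…,w_{k(i+1)}}` in order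
(every worker of `W_i` is visited before every worker of `W_j` for `i < j`),
then the complete locally stable matching is unique, namely the one assigning
block `W_i` to firm `f_{i+1}` (worker `w` works at firm `⌊w/k⌋`). -/
theorem unique_locally_stable_of_block_hamiltonian_path
    (k nf : ℕ) (hk : 0 < k) (G : SimpleGraph (Fin (k * nf)))
    (ψ : Fin (k * nf) ≃ Fin (k * nf))
    (hpath : ∀ i : Fin (k * nf), ∀ h : i.1 + 1 < k * nf,
      G.Adj (ψ i) (ψ ⟨i.1 + 1, h⟩))
    (hblocks : ∀ i j : Fin (k * nf), i ≤ j → (ψ i).1 / k ≤ (ψ j).1 / k) :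
    ∀ μ : Fin (k * nf) → Fin nf,
      (∀ f : Fin nf, (Finset.univ.filter (fun w => μ w = f)).card = k) →
      ((∀ w : Fin (k * nf), ∀ f : Fin nf, f < μ w →
          (∃ z, μ z = f ∧ (∀ y, μ y = f → y ≤ z) ∧ w < z) →
          ¬ ∃ y, G.Adj w y ∧ μ y = f) ↔
        ∀ w : Fin (k * nf), (μ w).1 = w.1 / k) :=
  unique_locally_stable_of_block_hamiltonian_path_general k nf G ψ hpath hblocks
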